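/- arXiv:2311.02472 — 2 statements merged into one kernel-verified Lean document; each statement's English description precedes it below -/
import Mathlib

section
/- Let $H$ be a real inner product space, $0 < q < 1$, $2 < p$, $\lambda > 0$, and let $M, N : H \to \mathbb{R}$ with $M(w), N(w) > 0$ for a fixed $w \neq 0$. Define $\Phi(t) = \frac{t^2}{2}\|w\|^2 - \lambda \frac{t^{1-q}}{1-q} M(w) - \frac{t^p}{p} N(w)$ for $t > 0$. If $\lambda M(w) < \max_{t>0}\left(t^{1+q}\|w\|^2 - t^{p-1+q}N(w)\right)$, then $\Phi'$ has exactly two zeros $0 < t_* < t^*$, with $\Phi''(t_*) > 0$ and $\Phi''(t^*) < 0$; moreover $\Phi$ is decreasing on $(0,t_*)$ and increasing on $(t_*, t^*)$. -/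
/-!
Writing `a = ‖w‖²`, `b = N(w)`, `c = λ M(w)`, the derivative factors as
`Φ'(t) = t^(-q) (g(t) - c)` with `g(t) = a t^(1+q) - b t^(p-1+q)`. Since
`g'(t) = t^q ((1+q) a - (p-1+q) b t^(p-2))` and `p > 2`, the function `g` increases up to a single
peak `t₀` and decreases afterwards, with `g(0) = 0` and `g(t) → -∞`. Hence for `0 < c < g(t₀)` the
level `c` is reached exactly once on each side of `t₀`, and the sign of `g - c` gives the signs of
`Φ'` and, at the two critical points, of `Φ'' = (1+q) a - (p-1+q) b t^(p-2)`.
-/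

open Real Set Filter

noncomputable section

def fiberLevel (a b q p t : ℝ) : ℝ := t ^ (1 + q) * a - t ^ (p - 1 + q) * b

def fiberLevelSlope (a b q p t : ℝ) : ℝ := (1 + q) * a - (p - 1 + q) * t ^ (p - 2) * b

def fiberLevelPeak (a b q p : ℝ) : ℝ := ((1 + q) * a / ((p - 1 + q) * b)) ^ (1 / (p - 2))

def fiberMap (a b c q p t : ℝ) : ℝ :=
  t ^ (2 : ℝ) / 2 * a - c * (t ^ (1 - q) / (1 - q)) - t ^ p / p * b

def fiberMapDeriv (a b c q p t : ℝ) : ℝ := t * a - c * t ^ (-q) - t ^ (p - 1) * b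

end

section FiberLevel

variable {a b q p t : ℝ}

theorem hasDerivAt_fiberLevel (ht : 0 < t) :
    HasDerivAt (fiberLevel a b q p) (t ^ q * fiberLevelSlope a b q p t) t := by
  have h := ((hasDerivAt_rpow_const (p := 1 + q) (Or.inl ht.ne')).mul_const a).sub
    ((hasDerivAt_rpow_const (p := p - 1 + q) (Or.inl ht.ne')).mul_const b)
  refine HasDerivAt.congr_deriv (f := fiberLevel a b q p) h ?_
  rw [fiberLevelSlope, show 1 + q - 1 = q by ring, show p - 1 + q - 1 = (p - 2) + q by ring,
    rpow_add ht]
  ring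

theorem continuous_fiberLevel (hq : -1 < q) (hp : 2 < p) : Continuous (fiberLevel a b q p) :=
  ((continuous_rpow_const (by linarith)).mul continuous_const).sub
    ((continuous_rpow_const (by linarith)).mul continuous_const)

theorem fiberLevel_zero (hq : -1 < q) (hp : 2 < p) : fiberLevel a b q p 0 = 0 := by
  rw [fiberLevel, zero_rpow (by linarith), zero_rpow (by linarith)]
  ring

theorem fiberLevel_neg (ht : 0 < t) (hab : a < t ^ (p - 2) * b) : fiberLevel a b q p t < 0 := by
  have hsplit : fiberLevel a b q p t = t ^ (1 + q) * (a - t ^ (p - 2) * b) := by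
    rw [fiberLevel, show p - 1 + q = (1 + q) + (p - 2) by ring, rpow_add ht (1 + q)]
    ring
  rw [hsplit]
  exact mul_neg_of_pos_of_neg (rpow_pos_of_pos ht _) (by linarith)

variable (ha : 0 < a) (hb : 0 < b) (hq : -1 < q) (hp : 2 < p)
include ha hb hq hp

theorem fiberLevelPeak_pos : 0 < fiberLevelPeak a b q p :=
  rpow_pos_of_pos (div_pos (by nlinarith) (by nlinarith)) _

theorem fiberLevelSlope_eq (t : ℝ) :
    fiberLevelSlope a b q p t =
      (p - 1 + q) * b * (fiberLevelPeak a b q p ^ (p - 2) - t ^ (p - 2)) := by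
  have hpeak : fiberLevelPeak a b q p ^ (p - 2) = (1 + q) * a / ((p - 1 + q) * b) := by
    rw [fiberLevelPeak, ← rpow_mul (div_pos (by nlinarith) (by nlinarith)).le, one_div,
      inv_mul_cancel₀ (by linarith), rpow_one]
  rw [fiberLevelSlope, hpeak]
  field_simp [show p - 1 + q ≠ 0 by linarith]

theorem fiberLevelSlope_pos (ht : 0 < t) (htpeak : t < fiberLevelPeak a b q p) :
    0 < fiberLevelSlope a b q p t := by
  rw [fiberLevelSlope_eq ha hb hq hp]
  have := rpow_lt_rpow ht.le htpeak (by linarith : 0 < p - 2)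
  exact mul_pos (mul_pos (by linarith) hb) (by linarith)

theorem fiberLevelSlope_neg (htpeak : fiberLevelPeak a b q p < t) :
    fiberLevelSlope a b q p t < 0 := by
  rw [fiberLevelSlope_eq ha hb hq hp]
  have := rpow_lt_rpow (fiberLevelPeak_pos ha hb hq hp).le htpeak (by linarith : 0 < p - 2)
  exact mul_neg_of_pos_of_neg (mul_pos (by linarith) hb) (by linarith)

theorem strictMonoOn_fiberLevel :
    StrictMonoOn (fiberLevel a b q p) (Ioc 0 (fiberLevelPeak a b q p)) := by
  refine strictMonoOn_of_deriv_pos (convex_Ioc _ _)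
    (fun t ht => (hasDerivAt_fiberLevel ht.1).continuousAt.continuousWithinAt) fun t ht => ?_
  rw [interior_Ioc] at ht
  rw [(hasDerivAt_fiberLevel ht.1).deriv]
  exact mul_pos (rpow_pos_of_pos ht.1 _) (fiberLevelSlope_pos ha hb hq hp ht.1 ht.2)

theorem strictAntiOn_fiberLevel :
    StrictAntiOn (fiberLevel a b q p) (Ici (fiberLevelPeak a b q p)) := by
  have hpeak := fiberLevelPeak_pos ha hb hq hp
  refine strictAntiOn_of_deriv_neg (convex_Ici _)
    (fun t ht => (hasDerivAt_fiberLevel (hpeak.trans_le ht)).continuousAt.continuousWithinAt)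
    fun t ht => ?_
  rw [interior_Ici] at ht
  rw [(hasDerivAt_fiberLevel (hpeak.trans ht)).deriv]
  exact mul_neg_of_pos_of_neg (rpow_pos_of_pos (hpeak.trans ht) _)
    (fiberLevelSlope_neg ha hb hq hp ht)

theorem fiberLevel_le_peak (ht : 0 < t) :
    fiberLevel a b q p t ≤ fiberLevel a b q p (fiberLevelPeak a b q p) := by
  have hpeak := fiberLevelPeak_pos ha hb hq hp
  rcases le_or_gt t (fiberLevelPeak a b q p) with h | h
  · exact (strictMonoOn_fiberLevel ha hb hq hp).monotoneOn ⟨ht, h⟩ ⟨hpeak, le_rfl⟩ h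
  · exact (strictAntiOn_fiberLevel ha hb hq hp).antitoneOn self_mem_Ici h.le h.le

theorem eq_or_eq_of_fiberLevel_eq {c t₁ t₂ : ℝ} (ht₁ : t₁ ∈ Ioc 0 (fiberLevelPeak a b q p))
    (ht₂ : fiberLevelPeak a b q p ≤ t₂) (hg₁ : fiberLevel a b q p t₁ = c)
    (hg₂ : fiberLevel a b q p t₂ = c) (ht : 0 < t) (hg : fiberLevel a b q p t = c) :
    t = t₁ ∨ t = t₂ := by
  rcases le_or_gt t (fiberLevelPeak a b q p) with h | h
  · exact .inl <| (strictMonoOn_fiberLevel ha hb hq hp).injOn ⟨ht, h⟩ ht₁ (hg.trans hg₁.symm)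
  · exact .inr <| (strictAntiOn_fiberLevel ha hb hq hp).injOn (mem_Ici.2 h.le) ht₂
      (hg.trans hg₂.symm)

theorem fiberLevel_lt_of_mem_Ioo {t₁ t₂ : ℝ} (ht₁ : t₁ ∈ Ioc 0 (fiberLevelPeak a b q p))
    (ht₂ : fiberLevelPeak a b q p ≤ t₂) (hg : fiberLevel a b q p t₁ = fiberLevel a b q p t₂)
    (ht : t ∈ Ioo t₁ t₂) : fiberLevel a b q p t₁ < fiberLevel a b q p t := by
  rcases le_or_gt t (fiberLevelPeak a b q p) with h | h
  · exact (strictMonoOn_fiberLevel ha hb hq hp) ht₁ ⟨ht₁.1.trans ht.1, h⟩ ht.1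
  · rw [hg]
    exact (strictAntiOn_fiberLevel ha hb hq hp) (mem_Ici.2 h.le) ht₂ ht.2

variable {c : ℝ} (hc : 0 < c) (hcpeak : c < fiberLevel a b q p (fiberLevelPeak a b q p))
include hc hcpeak

theorem exists_fiberLevel_eq_of_lt_peak :
    ∃ t ∈ Ioo 0 (fiberLevelPeak a b q p), fiberLevel a b q p t = c :=
  intermediate_value_Ioo (fiberLevelPeak_pos ha hb hq hp).le
    (continuous_fiberLevel hq hp).continuousOn ⟨(fiberLevel_zero hq hp).trans_lt hc, hcpeak⟩

theorem exists_fiberLevel_eq_of_peak_lt :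
    ∃ t ∈ Ioi (fiberLevelPeak a b q p), fiberLevel a b q p t = c := by
  obtain ⟨T, hTab, hTpeak⟩ := (((tendsto_rpow_atTop (by linarith : 0 < p - 2)).eventually_gt_atTop
    (a / b)).and (eventually_gt_atTop (fiberLevelPeak a b q p))).exists
  have hgT : fiberLevel a b q p T < c :=
    (fiberLevel_neg ((fiberLevelPeak_pos ha hb hq hp).trans hTpeak)
      ((div_lt_iff₀ hb).1 hTab)).trans hc
  obtain ⟨t, ht, hgt⟩ := intermediate_value_Ioo' hTpeak.le
    (continuous_fiberLevel hq hp).continuousOn ⟨hgT, hcpeak⟩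
  exact ⟨t, ht.1, hgt⟩

end FiberLevel

section FiberMap

variable {a b c q p t : ℝ}

theorem hasDerivAt_fiberMap (hq : q ≠ 1) (hp : p ≠ 0) (ht : 0 < t) :
    HasDerivAt (fiberMap a b c q p) (fiberMapDeriv a b c q p t) t := by
  have h := ((((hasDerivAt_rpow_const (p := (2 : ℝ)) (Or.inl ht.ne')).div_const 2).mul_const a).sub
    (((hasDerivAt_rpow_const (p := 1 - q) (Or.inl ht.ne')).div_const (1 - q)).const_mul c)).sub
    (((hasDerivAt_rpow_const (p := p) (Or.inl ht.ne')).div_const p).mul_const b)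
  refine HasDerivAt.congr_deriv (f := fiberMap a b c q p) h ?_
  rw [fiberMapDeriv, show (2 : ℝ) - 1 = 1 by norm_num, show 1 - q - 1 = -q by ring, rpow_one]
  field_simp [sub_ne_zero.2 hq.symm]

theorem fiberMapDeriv_eq (ht : 0 < t) :
    fiberMapDeriv a b c q p t = t ^ (-q) * (fiberLevel a b q p t - c) := by
  have h₁ : t ^ (-q) * t ^ (1 + q) = t := by
    rw [← rpow_add ht, show -q + (1 + q) = 1 by ring, rpow_one]
  have h₂ : t ^ (-q) * t ^ (p - 1 + q) = t ^ (p - 1) := by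
    rw [← rpow_add ht, show -q + (p - 1 + q) = p - 1 by ring]
  rw [fiberMapDeriv, fiberLevel]
  linear_combination b * h₂ - a * h₁

theorem deriv_fiberMap_eq_zero_iff (hq : q ≠ 1) (hp : p ≠ 0) (ht : 0 < t) :
    deriv (fiberMap a b c q p) t = 0 ↔ fiberLevel a b q p t = c := by
  rw [(hasDerivAt_fiberMap hq hp ht).deriv, fiberMapDeriv_eq ht,
    mul_eq_zero_iff_left (rpow_pos_of_pos ht _).ne', sub_eq_zero]

theorem hasDerivAt_fiberMapDeriv (ht : 0 < t) :
    HasDerivAt (fiberMapDeriv a b c q p)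
      (a + c * q * t ^ (-q - 1) - (p - 1) * t ^ (p - 2) * b) t := by
  have h := (((hasDerivAt_id t).mul_const a).sub
    ((hasDerivAt_rpow_const (p := -q) (Or.inl ht.ne')).const_mul c)).sub
    ((hasDerivAt_rpow_const (p := p - 1) (Or.inl ht.ne')).mul_const b)
  refine HasDerivAt.congr_deriv (f := fiberMapDeriv a b c q p) h ?_
  rw [show p - 1 - 1 = p - 2 by ring]
  ring

theorem deriv_deriv_fiberMap (hq : q ≠ 1) (hp : p ≠ 0) (ht : 0 < t)
    (hcrit : fiberLevel a b q p t = c) :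
    deriv (deriv (fiberMap a b c q p)) t = fiberLevelSlope a b q p t := by
  have hderiv : deriv (fiberMap a b c q p) =ᶠ[nhds t] fiberMapDeriv a b c q p :=
    eventually_of_mem (Ioi_mem_nhds ht) fun s hs => (hasDerivAt_fiberMap hq hp hs).deriv
  have h₁ : t ^ (-q - 1) * t ^ (1 + q) = 1 := by
    rw [← rpow_add ht, show -q - 1 + (1 + q) = 0 by ring, rpow_zero]
  have h₂ : t ^ (-q - 1) * t ^ (p - 1 + q) = t ^ (p - 2) := by
    rw [← rpow_add ht, show -q - 1 + (p - 1 + q) = p - 2 by ring]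
  rw [hderiv.deriv_eq, (hasDerivAt_fiberMapDeriv ht).deriv, fiberLevelSlope, ← hcrit, fiberLevel]
  linear_combination (q * a) * h₁ - (q * b) * h₂

theorem strictAntiOn_fiberMap (hq : q ≠ 1) (hp : p ≠ 0) {s : Set ℝ} (hs : Convex ℝ s)
    (hs0 : s ⊆ Ioi 0) (hlt : ∀ t ∈ s, fiberLevel a b q p t < c) :
    StrictAntiOn (fiberMap a b c q p) s := by
  refine strictAntiOn_of_deriv_neg hs
    (fun t ht => (hasDerivAt_fiberMap hq hp (hs0 ht)).continuousAt.continuousWithinAt)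
    fun t ht => ?_
  have ht' := interior_subset ht
  rw [(hasDerivAt_fiberMap hq hp (hs0 ht')).deriv, fiberMapDeriv_eq (hs0 ht')]
  exact mul_neg_of_pos_of_neg (rpow_pos_of_pos (hs0 ht') _) (sub_neg.2 (hlt t ht'))

theorem strictMonoOn_fiberMap (hq : q ≠ 1) (hp : p ≠ 0) {s : Set ℝ} (hs : Convex ℝ s)
    (hs0 : s ⊆ Ioi 0) (hgt : ∀ t ∈ s, c < fiberLevel a b q p t) :
    StrictMonoOn (fiberMap a b c q p) s := by
  refine strictMonoOn_of_deriv_pos hs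
    (fun t ht => (hasDerivAt_fiberMap hq hp (hs0 ht)).continuousAt.continuousWithinAt)
    fun t ht => ?_
  have ht' := interior_subset ht
  rw [(hasDerivAt_fiberMap hq hp (hs0 ht')).deriv, fiberMapDeriv_eq (hs0 ht')]
  exact mul_pos (rpow_pos_of_pos (hs0 ht') _) (sub_pos.2 (hgt t ht'))

end FiberMap

theorem exists_two_critical_points_fiberMap {a b c q p : ℝ} (ha : 0 < a) (hb : 0 < b) (hc : 0 < c)
    (hq : -1 < q) (hq1 : q ≠ 1) (hp : 2 < p)
    (hcpeak : c < fiberLevel a b q p (fiberLevelPeak a b q p)) :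
    ∃ t₁ t₂ : ℝ, 0 < t₁ ∧ t₁ < t₂ ∧
      deriv (fiberMap a b c q p) t₁ = 0 ∧ deriv (fiberMap a b c q p) t₂ = 0 ∧
      (∀ t : ℝ, 0 < t → deriv (fiberMap a b c q p) t = 0 → t = t₁ ∨ t = t₂) ∧
      0 < deriv (deriv (fiberMap a b c q p)) t₁ ∧ deriv (deriv (fiberMap a b c q p)) t₂ < 0 ∧
      StrictAntiOn (fiberMap a b c q p) (Ioo 0 t₁) ∧
      StrictMonoOn (fiberMap a b c q p) (Ioo t₁ t₂) := by
  have hp0 : p ≠ 0 := by linarith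
  obtain ⟨t₁, ⟨ht₁, ht₁peak⟩, hg₁⟩ := exists_fiberLevel_eq_of_lt_peak ha hb hq hp hc hcpeak
  obtain ⟨t₂, ht₂peak, hg₂⟩ := exists_fiberLevel_eq_of_peak_lt ha hb hq hp hc hcpeak
  have ht₁' : t₁ ∈ Ioc 0 (fiberLevelPeak a b q p) := ⟨ht₁, ht₁peak.le⟩
  have ht₂' : fiberLevelPeak a b q p ≤ t₂ := ht₂peak.le
  have ht₂ : 0 < t₂ := ht₁.trans (ht₁peak.trans ht₂peak)
  refine ⟨t₁, t₂, ht₁, ht₁peak.trans ht₂peak, (deriv_fiberMap_eq_zero_iff hq1 hp0 ht₁).2 hg₁,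
    (deriv_fiberMap_eq_zero_iff hq1 hp0 ht₂).2 hg₂, fun t ht hcrit => ?_, ?_, ?_, ?_, ?_⟩
  · exact eq_or_eq_of_fiberLevel_eq ha hb hq hp ht₁' ht₂' hg₁ hg₂ ht
      ((deriv_fiberMap_eq_zero_iff hq1 hp0 ht).1 hcrit)
  · rw [deriv_deriv_fiberMap hq1 hp0 ht₁ hg₁]
    exact fiberLevelSlope_pos ha hb hq hp ht₁ ht₁peak
  · rw [deriv_deriv_fiberMap hq1 hp0 ht₂ hg₂]
    exact fiberLevelSlope_neg ha hb hq hp ht₂peak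
  · refine strictAntiOn_fiberMap hq1 hp0 (convex_Ioo _ _) (fun t ht => ht.1) fun t ht => ?_
    rw [← hg₁]
    exact strictMonoOn_fiberLevel ha hb hq hp ⟨ht.1, (ht.2.trans ht₁peak).le⟩ ht₁' ht.2
  · refine strictMonoOn_fiberMap hq1 hp0 (convex_Ioo _ _) (fun t ht => ht₁.trans ht.1)
      fun t ht => ?_
    rw [← hg₁]
    exact fiberLevel_lt_of_mem_Ioo ha hb hq hp ht₁' ht₂' (hg₁.trans hg₂.symm) ht

theorem stmt_2_general {H : Type*} [NormedAddCommGroup H]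
    (p q lam : ℝ) (hq0 : 0 < q) (hq1 : q < 1) (hp : 2 < p) (hlam : 0 < lam)
    (M N : H → ℝ) (w : H) (hM : 0 < M w) (hN : 0 < N w)
    (Φ : ℝ → ℝ)
    (hΦ : ∀ t : ℝ, Φ t = t ^ (2 : ℝ) / 2 * ‖w‖ ^ 2
        - lam * (t ^ (1 - q) / (1 - q)) * M w - t ^ p / p * N w)
    (hmax : ∃ tmax : ℝ, 0 < tmax ∧
        (∀ t : ℝ, 0 < t →
          t ^ (1 + q) * ‖w‖ ^ 2 - t ^ (p - 1 + q) * N w ≤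
            tmax ^ (1 + q) * ‖w‖ ^ 2 - tmax ^ (p - 1 + q) * N w) ∧
        lam * M w < tmax ^ (1 + q) * ‖w‖ ^ 2 - tmax ^ (p - 1 + q) * N w) :
    ∃ tstar tsstar : ℝ, 0 < tstar ∧ tstar < tsstar ∧
      deriv Φ tstar = 0 ∧ deriv Φ tsstar = 0 ∧
      (∀ t : ℝ, 0 < t → deriv Φ t = 0 → t = tstar ∨ t = tsstar) ∧
      0 < deriv (deriv Φ) tstar ∧ deriv (deriv Φ) tsstar < 0 ∧
      StrictAntiOn Φ (Ioo 0 tstar) ∧ StrictMonoOn Φ (Ioo tstar tsstar) := by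
  obtain ⟨tmax, htmax, -, hlevel⟩ := hmax
  have hc : 0 < lam * M w := mul_pos hlam hM
  -- `0 < λ M(w) < g(tmax) ≤ tmax^(1+q) ‖w‖²`
  have ha : 0 < ‖w‖ ^ 2 := by
    have := rpow_pos_of_pos htmax (p - 1 + q)
    exact pos_of_mul_pos_right (by nlinarith : 0 < tmax ^ (1 + q) * ‖w‖ ^ 2)
      (rpow_pos_of_pos htmax _).le
  have hΦ' : Φ = fiberMap (‖w‖ ^ 2) (N w) (lam * M w) q p :=
    funext fun t => by rw [hΦ, fiberMap]; ring
  subst hΦ'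
  exact exists_two_critical_points_fiberMap ha hN hc (by linarith) hq1.ne hp
    (hlevel.trans_le (fiberLevel_le_peak ha hN (by linarith) hp htmax))

theorem stmt_2 {H : Type*} [NormedAddCommGroup H] [InnerProductSpace ℝ H]
    (p q lam : ℝ) (hq0 : 0 < q) (hq1 : q < 1) (hp : 2 < p) (hlam : 0 < lam)
    (M N : H → ℝ) (w : H) (hw : w ≠ 0) (hM : 0 < M w) (hN : 0 < N w)
    (Φ : ℝ → ℝ)
    (hΦ : ∀ t : ℝ, Φ t = t ^ (2 : ℝ) / 2 * ‖w‖ ^ 2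
        - lam * (t ^ (1 - q) / (1 - q)) * M w - t ^ p / p * N w)
    (hmax : ∃ tmax : ℝ, 0 < tmax ∧
        (∀ t : ℝ, 0 < t →
          t ^ (1 + q) * ‖w‖ ^ 2 - t ^ (p - 1 + q) * N w ≤
            tmax ^ (1 + q) * ‖w‖ ^ 2 - tmax ^ (p - 1 + q) * N w) ∧
        lam * M w < tmax ^ (1 + q) * ‖w‖ ^ 2 - tmax ^ (p - 1 + q) * N w) :
    ∃ tstar tsstar : ℝ, 0 < tstar ∧ tstar < tsstar ∧
      deriv Φ tstar = 0 ∧ deriv Φ tsstar = 0 ∧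
      (∀ t : ℝ, 0 < t → deriv Φ t = 0 → t = tstar ∨ t = tsstar) ∧
      0 < deriv (deriv Φ) tstar ∧ deriv (deriv Φ) tsstar < 0 ∧
      StrictAntiOn Φ (Ioo 0 tstar) ∧ StrictMonoOn Φ (Ioo tstar tsstar) :=
  stmt_2_general p q lam hq0 hq1 hp hlam M N w hM hN Φ hΦ hmax
end

section
/- Let $0 < q < 1 < 2 < p$ and $a, b, c > 0$. Suppose $t > 0$ satisfies both $a t - b t^{-q} - c t^{p-1} = 0$ (so $t$ is a critical point of $\Phi(s)=\frac{a s^2}{2}-\frac{b s^{1-q}}{1-q}-\frac{c s^p}{p}$) and $a + qb t^{-q-1} - (p-1)c t^{p-2} = 0$ (so $\Phi''(t)=0$). Then no such $t$ exists, i.e., the two equations are incompatible whenever $b < \frac{p-2}{p-1+q}\left(\frac{1+q}{p-1+q}\right)^{(1+q)/(p-2)} \frac{a^{(p-1+q)/(p-2)}}{c^{(1+q)/(p-2)}}$. -/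
/-!
At a degenerate critical point `t` of `Φ`, the equations `Φ'(t) = 0` and `Φ''(t) = 0` are linear
in `(a, b)`; solving them expresses `a` and `b` through `c` and `t`. Eliminating `t` then shows
that `b` equals the threshold value exactly, so `b` cannot lie strictly below it.
-/

open Real

noncomputable def nehariThreshold (p q a c : ℝ) : ℝ :=
  (p - 2) / (p - 1 + q) * ((1 + q) / (p - 1 + q)) ^ ((1 + q) / (p - 2)) *
    a ^ ((p - 1 + q) / (p - 2)) / c ^ ((1 + q) / (p - 2))

lemma inv_rpow_mul_mul_rpow_add_one_div_rpow {K c y : ℝ} (r : ℝ) (hK : 0 < K) (hc : 0 < c)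
    (hy : 0 ≤ y) : K⁻¹ ^ r * (K * c * y) ^ (r + 1) / c ^ r = K * c * y ^ (r + 1) := by
  have hKr : 0 < K ^ r := rpow_pos_of_pos hK r
  have hcr : 0 < c ^ r := rpow_pos_of_pos hc r
  rw [mul_rpow (by positivity) hy, mul_rpow hK.le hc.le, rpow_add_one hK.ne', rpow_add_one hc.ne',
    inv_rpow hK.le]
  field_simp

lemma coeffs_of_degenerate_critical_point {p q a b c t : ℝ} (ht : 0 < t)
    (h1 : a * t - b * t ^ (-q) - c * t ^ (p - 1) = 0)
    (h2 : a + q * b * t ^ (-q - 1) - (p - 1) * c * t ^ (p - 2) = 0) :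
    (1 + q) * a = (p - 1 + q) * c * t ^ (p - 2) ∧
      (1 + q) * b * t ^ (-q - 1) = (p - 2) * c * t ^ (p - 2) := by
  have hdiv : a - b * t ^ (-q - 1) - c * t ^ (p - 2) = 0 := by
    have : (a - b * t ^ (-q - 1) - c * t ^ (p - 2)) * t = 0 := by
      rw [← h1, sub_mul, sub_mul, mul_assoc, mul_assoc, ← rpow_add_one ht.ne',
        ← rpow_add_one ht.ne']
      ring_nf
    exact (mul_eq_zero.mp this).resolve_right ht.ne'
  exact ⟨by linear_combination q * hdiv + h2, by linear_combination h2 - hdiv⟩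

lemma eq_nehariThreshold_of_degenerate_critical_point {p q a b c t : ℝ} (hq : -1 < q) (hp : 2 < p)
    (hc : 0 < c) (ht : 0 < t)
    (h1 : a * t - b * t ^ (-q) - c * t ^ (p - 1) = 0)
    (h2 : a + q * b * t ^ (-q - 1) - (p - 1) * c * t ^ (p - 2) = 0) :
    b = nehariThreshold p q a c := by
  obtain ⟨ha, hb⟩ := coeffs_of_degenerate_critical_point ht h1 h2
  have hp2 : 0 < p - 2 := by linarith
  have h1q : 0 < 1 + q := by linarith
  have hpq : 0 < p - 1 + q := by linarith
  have hE : (p - 1 + q) / (p - 2) = (1 + q) / (p - 2) + 1 := by field_simp; ring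
  have ha' : a = (p - 1 + q) / (1 + q) * c * t ^ (p - 2) := by field_simp; linarith
  -- `b * t ^ (-q - 1)` and `(t ^ (p - 2)) ^ ((p - 1 + q) / (p - 2))` both carry `t ^ (p - 1 + q)`
  have hb' : b = (p - 2) / (1 + q) * c * (t ^ (p - 2)) ^ ((p - 1 + q) / (p - 2)) := by
    have hpow : (t ^ (p - 2)) ^ ((p - 1 + q) / (p - 2)) * t ^ (-q - 1) = t ^ (p - 2) := by
      rw [← rpow_mul ht.le, ← rpow_add ht]
      congr 1
      field_simp
      ring
    apply mul_right_cancel₀ (rpow_pos_of_pos ht (-q - 1)).ne'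
    rw [mul_assoc _ _ (t ^ (-q - 1)), hpow]
    field_simp
    linarith
  rw [nehariThreshold, mul_assoc, mul_div_assoc, hE, ha',
    show (1 + q) / (p - 1 + q) = ((p - 1 + q) / (1 + q))⁻¹ by simp,
    inv_rpow_mul_mul_rpow_add_one_div_rpow _ (by positivity) hc (rpow_nonneg ht.le _), hb', hE]
  field_simp

theorem stmt_3_general (p q a b c t : ℝ) (hq0 : 0 < q) (hp : 2 < p)
    (hc : 0 < c) (ht : 0 < t)
    (hb' : b < (p - 2) / (p - 1 + q) * ((1 + q) / (p - 1 + q)) ^ ((1 + q) / (p - 2)) *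
        a ^ ((p - 1 + q) / (p - 2)) / c ^ ((1 + q) / (p - 2)))
    (h1 : a * t - b * t ^ (-q) - c * t ^ (p - 1) = 0)
    (h2 : a + q * b * t ^ (-q - 1) - (p - 1) * c * t ^ (p - 2) = 0) :
    False :=
  hb'.ne (eq_nehariThreshold_of_degenerate_critical_point (neg_one_lt_zero.trans hq0) hp hc
    ht h1 h2)

theorem stmt_3 (p q a b c t : ℝ) (hq0 : 0 < q) (hq1 : q < 1) (hp : 2 < p)
    (ha : 0 < a) (hb : 0 < b) (hc : 0 < c) (ht : 0 < t)
    (hb' : b < (p - 2) / (p - 1 + q) * ((1 + q) / (p - 1 + q)) ^ ((1 + q) / (p - 2)) *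
        a ^ ((p - 1 + q) / (p - 2)) / c ^ ((1 + q) / (p - 2)))
    (h1 : a * t - b * t ^ (-q) - c * t ^ (p - 1) = 0)
    (h2 : a + q * b * t ^ (-q - 1) - (p - 1) * c * t ^ (p - 2) = 0) :
    False :=
  stmt_3_general p q a b c t hq0 hp hc ht hb' h1 h2
end
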